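/- Under condition [R_L], the limit C_L := lim_{x→∞} L(x) exists, is finite and positive, and the sequence N_ν(n) = L(1/Q_n)^{−1/ν} satisfies N_ν(n) = C_L^{−1/ν} + O(n^{−ν}) as n → ∞. -/

import Mathlib

open Filter Topology Asymptotics Set

/-!
Since `f'(1) = 1`, `(f s - s) / (1 - s) → 0` as `s → 1⁻`, i.e. `L x / x ^ ν → 0`.
Condition [R_L] with `λ = 2` then gives `log L (2y) - log L y = O(L y / y ^ ν)`, and these
increments decay geometrically along `y, 2y, 4y, …` because `L (2y) / (2y) ^ ν ≤ θ L y / y ^ ν`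
with `θ ≈ 2 ^ (-ν) < 1`. So `log L (2 ^ k x)` converges, with error `O(L x / x ^ ν)`, and slow
variation shows that the limit does not depend on `x`; hence `L x = C + O(x ^ (-ν))`.
The orbit `f^[n] 0` increases to `1`, the only fixed point of `f` in `[0, 1]`, and
`Q n - Q (n+1) = Q n ^ (1 + ν) L (1 / Q n)` forces `1 / Q (n+1) - 1 / Q n ≥ C / 2` eventually.
So `Q n = O(1 / n)` and `N n - C ^ (-1/ν) = O(L (1 / Q n) - C) = O(Q n ^ ν) = O(n ^ (-ν))`.
-/

noncomputable def pgf (p : ℕ → ℝ) (s : ℝ) : ℝ := ∑' j, p j * s ^ j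

lemma summable_of_tsum_ne_zero {β M : Type*} [AddCommMonoid M] [TopologicalSpace M] {f : β → M}
    (h : ∑' j, f j ≠ 0) : Summable f :=
  by_contra fun hf => h (tsum_eq_zero_of_not_summable hf)

section pgf

variable {p : ℕ → ℝ}

lemma norm_mul_pow_le (hp : ∀ j, 0 ≤ p j) {s : ℝ} (hs : |s| ≤ 1) (j : ℕ) :
    ‖p j * s ^ j‖ ≤ p j := by
  rw [norm_mul, norm_pow, Real.norm_of_nonneg (hp j)]
  exact mul_le_of_le_one_right (hp j) (pow_le_one₀ (norm_nonneg s) hs)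

lemma summable_mul_pow (hp : ∀ j, 0 ≤ p j) (hps : Summable p) {s : ℝ} (hs : |s| ≤ 1) :
    Summable fun j => p j * s ^ j :=
  hps.of_norm_bounded (norm_mul_pow_le hp hs)

lemma continuousAt_pgf (hp : ∀ j, 0 ≤ p j) (hps : Summable p) {s : ℝ} (hs : s ∈ Ioo (-1) 1) :
    ContinuousAt (pgf p) s :=
  (continuousOn_tsum (fun j => (continuous_const.mul (continuous_pow j)).continuousOn) hps
    fun j _ hs => norm_mul_pow_le hp (abs_le.2 hs) j).continuousAt (Icc_mem_nhds hs.1 hs.2)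

lemma pgf_nonneg (hp : ∀ j, 0 ≤ p j) {s : ℝ} (hs : 0 ≤ s) : 0 ≤ pgf p s :=
  tsum_nonneg fun j => mul_nonneg (hp j) (pow_nonneg hs j)

lemma one_sub_pgf_eq (hp : ∀ j, 0 ≤ p j) (hp_sum : ∑' j, p j = 1) {s : ℝ} (hs : |s| ≤ 1) :
    1 - pgf p s = (1 - s) * ∑' j, p j * ∑ i ∈ Finset.range j, s ^ i := by
  have hps := summable_of_tsum_ne_zero (hp_sum ▸ one_ne_zero)
  calc 1 - pgf p s = ∑' j, (p j - p j * s ^ j) := by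
        rw [hps.tsum_sub (summable_mul_pow hp hps hs), hp_sum, pgf]
    _ = ∑' j, (1 - s) * (p j * ∑ i ∈ Finset.range j, s ^ i) := by
        congr with j
        rw [mul_left_comm, mul_neg_geom_sum]
        ring
    _ = _ := tsum_mul_left

lemma pgf_lt_one (hp : ∀ j, 0 ≤ p j) (hp_sum : ∑' j, p j = 1)
    (hp_mean : ∑' j : ℕ, (j : ℝ) * p j = 1) {s : ℝ} (hs0 : 0 ≤ s) (hs1 : s < 1) :
    pgf p s < 1 := by
  have hps := summable_of_tsum_ne_zero (hp_sum ▸ one_ne_zero)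
  obtain ⟨j, hj, hpj⟩ : ∃ j, j ≠ 0 ∧ p j ≠ 0 := by
    by_contra! h
    have : ∀ j : ℕ, (j : ℝ) * p j = 0 := fun j => by
      by_cases hj : j = 0 <;> simp [hj, h]
    simp [this] at hp_mean
  rw [← hp_sum]
  refine Summable.tsum_lt_tsum (i := j) (fun k => ?_) ?_
    (summable_mul_pow hp hps (abs_le.2 ⟨by linarith, hs1.le⟩)) hps
  · exact mul_le_of_le_one_right (hp k) (pow_le_one₀ hs0 hs1.le)
  · exact mul_lt_of_lt_one_right ((hp j).lt_of_ne' hpj) (pow_lt_one₀ hs0 hs1 hj)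

lemma tendsto_pgf_sub_self_div (hp : ∀ j, 0 ≤ p j) (hp_sum : ∑' j, p j = 1)
    (hp_mean : ∑' j : ℕ, (j : ℝ) * p j = 1) :
    Tendsto (fun s => (pgf p s - s) / (1 - s)) (𝓝[<] 1) (𝓝 0) := by
  have hmean := summable_of_tsum_ne_zero (hp_mean ▸ one_ne_zero)
  have hsum : Tendsto (fun s => ∑' j, p j * ∑ i ∈ Finset.range j, s ^ i) (𝓝[<] 1)
      (𝓝 (∑' j : ℕ, (j : ℝ) * p j)) := by
    simp_rw [mul_comm _ (p _)]
    refine tendsto_tsum_of_dominated_convergence (bound := fun j : ℕ => p j * j)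
      (by simpa only [mul_comm] using hmean) (fun j => ?_) ?_
    · have hcont : Continuous fun s : ℝ => p j * ∑ i ∈ Finset.range j, s ^ i := by fun_prop
      simpa [mul_comm] using (hcont.tendsto 1).mono_left nhdsWithin_le_nhds
    · filter_upwards [Ioo_mem_nhdsLT (show (0 : ℝ) < 1 from one_pos)] with s hs j
      rw [Real.norm_of_nonneg
        (mul_nonneg (hp j) (Finset.sum_nonneg fun i _ => pow_nonneg hs.1.le i))]
      refine mul_le_mul_of_nonneg_left ?_ (hp j)
      simpa using Finset.sum_le_sum fun i (_ : i ∈ Finset.range j) => pow_le_one₀ hs.1.le hs.2.le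
  have hlim := tendsto_const_nhds (x := (1 : ℝ)) |>.sub hsum
  rw [hp_mean, sub_self] at hlim
  refine hlim.congr' ?_
  filter_upwards [Ioo_mem_nhdsLT (show (-1 : ℝ) < 1 by norm_num)] with s hs
  have h := one_sub_pgf_eq hp hp_sum (abs_le.2 ⟨hs.1.le, hs.2.le⟩)
  rw [eq_div_iff (sub_ne_zero.2 hs.2.ne')]
  linarith

lemma mapsTo_pgf (hp : ∀ j, 0 ≤ p j) (hp_sum : ∑' j, p j = 1)
    (hp_mean : ∑' j : ℕ, (j : ℝ) * p j = 1) : MapsTo (pgf p) (Ico 0 1) (Ico 0 1) :=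
  fun _ hs => ⟨pgf_nonneg hp hs.1, pgf_lt_one hp hp_sum hp_mean hs.1 hs.2⟩

end pgf

lemma tendsto_div_rpow_of_sub_self_eq {f L : ℝ → ℝ} {ν : ℝ}
    (hfΛ : ∀ s ∈ Ico (0 : ℝ) 1, f s - s = (1 - s) ^ (1 + ν) * L (1 / (1 - s)))
    (hf : Tendsto (fun s => (f s - s) / (1 - s)) (𝓝[<] 1) (𝓝 0)) :
    Tendsto (fun x => L x / x ^ ν) atTop (𝓝 0) := by
  have hs : Tendsto (fun x : ℝ => 1 - x⁻¹) atTop (𝓝[<] 1) := by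
    refine tendsto_nhdsWithin_iff.2 ⟨?_, ?_⟩
    · simpa using tendsto_inv_atTop_zero.const_sub (1 : ℝ)
    · filter_upwards [eventually_gt_atTop 0] with x hx
      simpa using hx
  refine (hf.comp hs).congr' ?_
  filter_upwards [eventually_gt_atTop 1] with x hx
  have hx0 : 0 < x := one_pos.trans hx
  have hmem : 1 - x⁻¹ ∈ Ico (0 : ℝ) 1 := ⟨by simpa using inv_le_one_of_one_le₀ hx.le, by simpa⟩
  simp only [Function.comp_apply, hfΛ _ hmem, sub_sub_cancel, one_div, inv_inv,
    Real.rpow_add (inv_pos.2 hx0), Real.rpow_one, Real.inv_rpow hx0.le]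
  field_simp

lemma abs_log_le_two_mul_abs_sub_one {r : ℝ} (hr : |r - 1| ≤ 1 / 2) :
    |Real.log r| ≤ 2 * |r - 1| := by
  have h := Real.abs_log_sub_add_sum_range_le (x := 1 - r) (by rw [abs_sub_comm]; linarith) 0
  rw [abs_sub_comm] at h
  simp only [Finset.range_zero, Finset.sum_empty, zero_add, sub_sub_cancel, pow_one] at h
  calc |Real.log r| ≤ |r - 1| / (1 - |r - 1|) := h
    _ ≤ |r - 1| / (1 / 2) := by gcongr; linarith
    _ = 2 * |r - 1| := by ring

lemma exists_tendsto_iterate_of_abs_sub_le {α : Type*} {T : α → α} {u h : α → ℝ} {S : Set α}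
    {θ : ℝ} (hθ0 : 0 ≤ θ) (hθ1 : θ < 1) (hS : MapsTo T S S)
    (hstep : ∀ y ∈ S, |u (T y) - u y| ≤ h y) (hcontr : ∀ y ∈ S, h (T y) ≤ θ * h y)
    {x : α} (hx : x ∈ S) :
    ∃ c, Tendsto (fun k => u (T^[k] x)) atTop (𝓝 c) ∧ |u x - c| ≤ h x / (1 - θ) := by
  have hgeom : ∀ k, h (T^[k] x) ≤ h x * θ ^ k := by
    intro k
    induction k with
    | zero => simp
    | succ k ih =>
      rw [Function.iterate_succ_apply', pow_succ]
      nlinarith [hcontr _ (hS.iterate k hx)]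
  have hdist : ∀ k, dist (u (T^[k] x)) (u (T^[k + 1] x)) ≤ h x * θ ^ k := fun k => by
    rw [dist_comm, Real.dist_eq, Function.iterate_succ_apply']
    exact (hstep _ (hS.iterate k hx)).trans (hgeom k)
  obtain ⟨c, hc⟩ := cauchySeq_tendsto_of_complete (cauchySeq_of_le_geometric _ _ hθ1 hdist)
  exact ⟨c, hc, by simpa [Real.dist_eq] using dist_le_of_le_geometric_of_tendsto₀ _ _ hθ1 hdist hc⟩

lemma exists_eventually_abs_log_sub_le {L : ℝ → ℝ} {ν : ℝ} (hν : 0 < ν)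
    (hLpos : ∀ x, 0 < x → 0 < L x)
    (hRL : (fun x => L (2 * x) / L x - 1) =O[atTop] (fun x => L x / x ^ ν))
    (hg : Tendsto (fun x => L x / x ^ ν) atTop (𝓝 0)) :
    ∃ K θ, 0 ≤ K ∧ 0 ≤ θ ∧ θ < 1 ∧ ∀ᶠ y in atTop,
      |Real.log (L (2 * y)) - Real.log (L y)| ≤ K * (L y / y ^ ν) ∧
      L (2 * y) / (2 * y) ^ ν ≤ θ * (L y / y ^ ν) := by
  obtain ⟨c, hc, hcw⟩ := hRL.exists_pos
  have h2ν : 1 < (2 : ℝ) ^ ν := Real.one_lt_rpow one_lt_two hν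
  set δ : ℝ := min ((2 ^ ν - 1) / 2) (1 / 2)
  have hδ0 : 0 < δ := lt_min (by linarith) one_half_pos
  refine ⟨2 * c, (1 + δ) / 2 ^ ν, by positivity, by positivity, ?_, ?_⟩
  · have : δ ≤ (2 ^ ν - 1) / 2 := min_le_left _ _
    rw [div_lt_one (by positivity)]
    linarith
  have hsmall : ∀ᶠ y in atTop, c * (L y / y ^ ν) ≤ δ :=
    (hg.const_mul c).eventually (eventually_le_nhds (by simpa using hδ0))
  filter_upwards [hcw.bound, hsmall, eventually_gt_atTop 0] with y hratio hsm hy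
  have hLy := hLpos y hy
  rw [Real.norm_eq_abs, Real.norm_eq_abs,
    abs_of_nonneg (div_nonneg hLy.le (Real.rpow_nonneg hy.le ν))] at hratio
  have hr : |L (2 * y) / L y - 1| ≤ δ := hratio.trans hsm
  constructor
  · rw [← Real.log_div (hLpos _ (by linarith)).ne' hLy.ne']
    calc _ ≤ 2 * |L (2 * y) / L y - 1| :=
          abs_log_le_two_mul_abs_sub_one (hr.trans (min_le_right _ _))
      _ ≤ 2 * c * (L y / y ^ ν) := by linarith
  · have hup : L (2 * y) ≤ (1 + δ) * L y := by
      have := (abs_le.1 hr).2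
      rwa [sub_le_iff_le_add', div_le_iff₀ hLy] at this
    rw [Real.mul_rpow zero_le_two hy.le]
    calc L (2 * y) / (2 ^ ν * y ^ ν) ≤ (1 + δ) * L y / (2 ^ ν * y ^ ν) := by gcongr
      _ = (1 + δ) / 2 ^ ν * (L y / y ^ ν) := by ring

lemma tendsto_log_two_pow_mul {L : ℝ → ℝ} (hLpos : ∀ x, 0 < x → 0 < L x)
    (hSV : ∀ l, 0 < l → Tendsto (fun x => L (l * x) / L x) atTop (𝓝 1))
    {x₀ x ℓ : ℝ} (hx₀ : 0 < x₀) (hx : 0 < x)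
    (hℓ : Tendsto (fun k : ℕ => Real.log (L (2 ^ k * x₀))) atTop (𝓝 ℓ)) :
    Tendsto (fun k : ℕ => Real.log (L (2 ^ k * x))) atTop (𝓝 ℓ) := by
  have hpow : Tendsto (fun k : ℕ => 2 ^ k * x₀) atTop atTop :=
    (tendsto_pow_atTop_atTop_of_one_lt one_lt_two).atTop_mul_const hx₀
  have hratio := (Real.continuousAt_log one_ne_zero).tendsto.comp
    ((hSV _ (div_pos hx hx₀)).comp hpow)
  rw [Real.log_one] at hratio
  refine (zero_add ℓ ▸ hratio.add hℓ).congr fun k => ?_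
  have h2k : x / x₀ * (2 ^ k * x₀) = 2 ^ k * x := by field_simp
  simp only [Function.comp_apply, h2k]
  rw [Real.log_div (hLpos _ (by positivity)).ne' (hLpos _ (by positivity)).ne', sub_add_cancel]

lemma exists_isBigO_log_sub {L : ℝ → ℝ} {ν : ℝ} (hν : 0 < ν)
    (hLpos : ∀ x, 0 < x → 0 < L x)
    (hSV : ∀ l, 0 < l → Tendsto (fun x => L (l * x) / L x) atTop (𝓝 1))
    (hRL : (fun x => L (2 * x) / L x - 1) =O[atTop] (fun x => L x / x ^ ν))
    (hg : Tendsto (fun x => L x / x ^ ν) atTop (𝓝 0)) :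
    ∃ ℓ, (fun x => Real.log (L x) - ℓ) =O[atTop] (fun x => L x / x ^ ν) := by
  obtain ⟨K, θ, hK, hθ0, hθ1, hev⟩ := exists_eventually_abs_log_sub_le hν hLpos hRL hg
  obtain ⟨x₀, hx₀⟩ := eventually_atTop.1 (hev.and (eventually_gt_atTop 0))
  have hS : MapsTo (2 * ·) (Ici x₀) (Ici x₀) := fun y (hy : x₀ ≤ y) =>
    show x₀ ≤ 2 * y by linarith [(hx₀ y hy).2]
  have hlim (x : ℝ) (hx : x ∈ Ici x₀) := exists_tendsto_iterate_of_abs_sub_le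
    (u := fun y => Real.log (L y)) (h := fun y => K * (L y / y ^ ν)) hθ0 hθ1 hS
    (fun y hy => (hx₀ y hy).1.1)
    (fun y hy => by
      simpa only [mul_left_comm K θ] using mul_le_mul_of_nonneg_left (hx₀ y hy).1.2 hK) hx
  simp only [mul_left_iterate_apply] at hlim
  obtain ⟨ℓ, hℓ, -⟩ := hlim x₀ (mem_Ici.2 le_rfl)
  refine ⟨ℓ, IsBigO.of_bound (K / (1 - θ)) ?_⟩
  filter_upwards [eventually_ge_atTop x₀] with x hx
  have hxpos := (hx₀ x hx).2
  obtain ⟨c, hc, hcx⟩ := hlim x hx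
  rw [tendsto_nhds_unique hc (tendsto_log_two_pow_mul hLpos hSV (hx₀ x₀ le_rfl).2 hxpos hℓ)]
    at hcx
  rw [Real.norm_eq_abs, Real.norm_of_nonneg (div_nonneg (hLpos x hxpos).le
    (Real.rpow_nonneg hxpos.le ν))]
  exact hcx.trans_eq (by ring)

lemma exists_isBigO_sub_rpow_neg {L : ℝ → ℝ} {ν : ℝ} (hν : 0 < ν)
    (hLpos : ∀ x, 0 < x → 0 < L x)
    (hSV : ∀ l, 0 < l → Tendsto (fun x => L (l * x) / L x) atTop (𝓝 1))
    (hRL : (fun x => L (2 * x) / L x - 1) =O[atTop] (fun x => L x / x ^ ν))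
    (hg : Tendsto (fun x => L x / x ^ ν) atTop (𝓝 0)) :
    ∃ C, 0 < C ∧ (fun x => L x - C) =O[atTop] (fun x => x ^ (-ν)) := by
  obtain ⟨ℓ, hlog⟩ := exists_isBigO_log_sub hν hLpos hSV hRL hg
  have hlogℓ : Tendsto (fun x => Real.log (L x)) atTop (𝓝 ℓ) := by
    simpa using (hlog.trans_tendsto hg).add_const ℓ
  have hpos : ∀ᶠ x : ℝ in atTop, 0 < x := eventually_gt_atTop 0
  have hexp : ∀ᶠ x in atTop, Real.exp (Real.log (L x)) = L x := by
    filter_upwards [hpos] with x hx using Real.exp_log (hLpos x hx)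
  have hLℓ : Tendsto L atTop (𝓝 (Real.exp ℓ)) :=
    ((Real.continuous_exp.tendsto ℓ).comp hlogℓ).congr' hexp
  refine ⟨Real.exp ℓ, Real.exp_pos ℓ, ?_⟩
  calc (fun x => L x - Real.exp ℓ) =O[atTop] (fun x => Real.log (L x) - ℓ) :=
        ((Real.hasDerivAt_exp ℓ).isBigO_sub.comp_tendsto hlogℓ).congr'
          (hexp.mono fun x hx => by simp [hx]) EventuallyEq.rfl
    _ =O[atTop] (fun x => L x / x ^ ν) := hlog
    _ =O[atTop] (fun x => 1 * x ^ (-ν)) :=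
        ((hLℓ.isBigO_one ℝ).mul (isBigO_refl _ _)).congr'
          (hpos.mono fun x hx => by simp [Real.rpow_neg hx.le, div_eq_mul_inv]) EventuallyEq.rfl
    _ = (fun x => x ^ (-ν)) := by simp

lemma tendsto_iterate_of_lt_self {g : ℝ → ℝ} {a b x : ℝ} (hmaps : MapsTo g (Ico a b) (Ico a b))
    (hlt : ∀ s ∈ Ico a b, s < g s) (hcont : ∀ s ∈ Ico a b, ContinuousAt g s)
    (hx : x ∈ Ico a b) : Tendsto (fun n => g^[n] x) atTop (𝓝 b) := by
  have hmem : ∀ n, g^[n] x ∈ Ico a b := fun n => hmaps.iterate n hx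
  have hmono : Monotone fun n => g^[n] x := monotone_nat_of_le_succ fun n => by
    rw [Function.iterate_succ_apply']
    exact (hlt _ (hmem n)).le
  have hbdd : BddAbove (range fun n => g^[n] x) :=
    ⟨b, forall_mem_range.2 fun n => (hmem n).2.le⟩
  have hlim := tendsto_atTop_ciSup hmono hbdd
  have hyb : ⨆ n, g^[n] x ≤ b := ciSup_le fun n => (hmem n).2.le
  obtain hyb | hyb := hyb.lt_or_eq
  · have hy : ⨆ n, g^[n] x ∈ Ico a b := ⟨(hmem 0).1.trans (le_ciSup hbdd 0), hyb⟩
    exact absurd (isFixedPt_of_tendsto_iterate hlim (hcont _ hy)) (hlt _ hy).ne'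
  · rwa [hyb] at hlim

lemma le_inv_sub_inv_of_sub_eq {a b ν ℓ : ℝ} (ha0 : 0 < a) (ha1 : a ≤ 1) (hb : 0 < b)
    (hν : ν ≤ 1) (hℓ : 0 ≤ ℓ) (h : a - b = a ^ (1 + ν) * ℓ) : ℓ ≤ b⁻¹ - a⁻¹ := by
  have hsq : a ^ 2 ≤ a ^ (1 + ν) := by
    rw [← Real.rpow_natCast]
    exact Real.rpow_le_rpow_of_exponent_ge ha0 ha1 (by push_cast; linarith)
  have hba : b ≤ a := by nlinarith [Real.rpow_nonneg ha0.le (1 + ν)]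
  rw [inv_sub_inv hb.ne' ha0.ne', le_div_iff₀ (mul_pos hb ha0)]
  nlinarith [mul_le_mul_of_nonneg_right hsq hℓ, mul_nonneg hℓ (sub_nonneg.2 hba)]

lemma isBigO_inv_of_le_sub {u : ℕ → ℝ} {c : ℝ} (hc : 0 < c) (hu : ∀ n, 0 ≤ u n)
    (h : ∀ᶠ n in atTop, c ≤ u (n + 1) - u n) :
    (fun n => (u n)⁻¹) =O[atTop] (fun n => (n : ℝ)⁻¹) := by
  obtain ⟨N, hN⟩ := eventually_atTop.1 h
  have hlin : ∀ n ≥ N, c * (n - N) ≤ u n := by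
    intro n hn
    induction n, hn using Nat.le_induction with
    | base => simpa using hu N
    | succ n hn ih =>
      push_cast
      linarith [hN n hn]
  refine IsBigO.of_bound (2 / c) ?_
  filter_upwards [eventually_ge_atTop (2 * N + 1)] with n hn
  have hn' : (2 * N + 1 : ℝ) ≤ n := by exact_mod_cast hn
  have hlow : c * n / 2 ≤ u n := by nlinarith [hlin n (by omega)]
  rw [norm_inv, norm_inv, Real.norm_of_nonneg (hu n), Real.norm_natCast]
  calc (u n)⁻¹ ≤ (c * n / 2)⁻¹ := inv_anti₀ (by nlinarith) hlow
    _ = 2 / c * (n : ℝ)⁻¹ := by field_simp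

section orbit

variable {f L : ℝ → ℝ} {ν : ℝ} (hLpos : ∀ x, 0 < x → 0 < L x)
  (hfΛ : ∀ s ∈ Ico (0 : ℝ) 1, f s - s = (1 - s) ^ (1 + ν) * L (1 / (1 - s)))
  (hmaps : MapsTo f (Ico 0 1) (Ico 0 1))

include hLpos hfΛ hmaps

lemma tendsto_one_sub_iterate_nhdsGT (hcont : ∀ s ∈ Ico (0 : ℝ) 1, ContinuousAt f s) :
    Tendsto (fun n => 1 - f^[n] 0) atTop (𝓝[>] 0) := by
  have hlt : ∀ s ∈ Ico (0 : ℝ) 1, s < f s := fun s hs => by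
    have h1s : 0 < 1 - s := sub_pos.2 hs.2
    rw [← sub_pos, hfΛ s hs]
    exact mul_pos (Real.rpow_pos_of_pos h1s _) (hLpos _ (one_div_pos.2 h1s))
  have h1 := tendsto_iterate_of_lt_self hmaps hlt hcont ⟨le_rfl, one_pos⟩
  refine tendsto_nhdsWithin_iff.2 ⟨by simpa using h1.const_sub 1, ?_⟩
  exact Eventually.of_forall fun n => sub_pos.2 (hmaps.iterate n ⟨le_rfl, one_pos⟩).2

lemma isBigO_one_sub_iterate (hcont : ∀ s ∈ Ico (0 : ℝ) 1, ContinuousAt f s) (hν : ν ≤ 1)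
    {C : ℝ} (hC : 0 < C) (hL : Tendsto L atTop (𝓝 C)) :
    (fun n => 1 - f^[n] 0) =O[atTop] (fun n => (n : ℝ)⁻¹) := by
  set Q := fun n => 1 - f^[n] 0 with hQ
  have hmem (n : ℕ) : f^[n] 0 ∈ Ico 0 1 := hmaps.iterate n ⟨le_rfl, one_pos⟩
  have hQpos (n : ℕ) : 0 < Q n := sub_pos.2 (hmem n).2
  have hrec (n : ℕ) : Q n - Q (n + 1) = Q n ^ (1 + ν) * L (Q n)⁻¹ := by
    simp only [hQ, Function.iterate_succ_apply', ← one_div, ← hfΛ _ (hmem n)]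
    ring
  have hLQ := hL.comp (tendsto_inv_nhdsGT_zero.comp
    (tendsto_one_sub_iterate_nhdsGT hLpos hfΛ hmaps hcont))
  have hstep : ∀ᶠ n in atTop, C / 2 ≤ (Q (n + 1))⁻¹ - (Q n)⁻¹ := by
    filter_upwards [hLQ.eventually (eventually_ge_nhds (half_lt_self hC))] with n hn
    exact hn.trans (le_inv_sub_inv_of_sub_eq (hQpos n) (by linarith [(hmem n).1])
      (hQpos (n + 1)) hν (hLpos _ (inv_pos.2 (hQpos n))).le (hrec n))
  simpa using isBigO_inv_of_le_sub (half_pos hC) (fun n => (inv_pos.2 (hQpos n)).le) hstep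

end orbit

theorem stmt_8_general
    (p : ℕ → ℝ) (hp_nonneg : ∀ j, 0 ≤ p j)
    (hp_sum : ∑' j : ℕ, p j = 1) (hp_mean : ∑' j : ℕ, (j : ℝ) * p j = 1)
    (f : ℝ → ℝ) (hf : ∀ s : ℝ, f s = ∑' j : ℕ, p j * s ^ j)
    (ν : ℝ) (hν : ν ∈ Set.Ioo (0 : ℝ) 1)
    (L : ℝ → ℝ) (hLpos : ∀ x : ℝ, 0 < x → 0 < L x)
    (hSV : ∀ l : ℝ, 0 < l →
      Filter.Tendsto (fun x => L (l * x) / L x) Filter.atTop (𝓝 1))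
    (hfΛ : ∀ s ∈ Set.Ico (0 : ℝ) 1,
      f s - s = (1 - s) ^ (1 + ν) * L (1 / (1 - s)))
    (hRL : ∀ l : ℝ, 0 < l →
      (fun x => L (l * x) / L x - 1) =O[Filter.atTop] (fun x => L x / x ^ ν))
    (Q : ℕ → ℝ) (hQ : ∀ n, Q n = 1 - f^[n] 0)
    (N : ℕ → ℝ) (hN : ∀ n, N n = (L (1 / Q n)) ^ (-(1 / ν)))
    :
    ∃ Cₗ : ℝ, 0 < Cₗ ∧ Filter.Tendsto L Filter.atTop (𝓝 Cₗ) ∧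
      (fun n : ℕ => N n - Cₗ ^ (-(1 / ν))) =O[Filter.atTop]
        (fun n : ℕ => (n : ℝ) ^ (-ν)) := by
  obtain rfl : f = pgf p := funext hf
  have hps : Summable p := summable_of_tsum_ne_zero (hp_sum ▸ one_ne_zero)
  have hg := tendsto_div_rpow_of_sub_self_eq hfΛ (tendsto_pgf_sub_self_div hp_nonneg hp_sum hp_mean)
  obtain ⟨C, hC, hLC⟩ := exists_isBigO_sub_rpow_neg hν.1 hLpos hSV (hRL 2 two_pos) hg
  have hLtend : Tendsto L atTop (𝓝 C) := by
    simpa using (hLC.trans_tendsto (tendsto_rpow_neg_atTop hν.1)).add_const C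
  have hmaps := mapsTo_pgf hp_nonneg hp_sum hp_mean
  have hcont : ∀ s ∈ Ico (0 : ℝ) 1, ContinuousAt (pgf p) s :=
    fun s hs => continuousAt_pgf hp_nonneg hps ⟨by linarith [hs.1], hs.2⟩
  have hQ0 : Tendsto Q atTop (𝓝[>] 0) := by
    simpa only [← hQ] using tendsto_one_sub_iterate_nhdsGT hLpos hfΛ hmaps hcont
  have hQn : Q =O[atTop] (fun n => (n : ℝ)⁻¹) := by
    simpa only [← hQ] using isBigO_one_sub_iterate hLpos hfΛ hmaps hcont hν.2.le hC hLtend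
  have hQpos : ∀ᶠ n in atTop, 0 < Q n := hQ0 self_mem_nhdsWithin
  have hinvQ : Tendsto (fun n => 1 / Q n) atTop atTop := by
    simpa only [one_div, Function.comp_def] using tendsto_inv_nhdsGT_zero.comp hQ0
  have hφ := (Real.hasDerivAt_rpow_const (p := -(1 / ν)) (Or.inl hC.ne')).isBigO_sub
  refine ⟨C, hC, hLtend, ?_⟩
  calc (fun n => N n - C ^ (-(1 / ν))) =O[atTop] (fun n => L (1 / Q n) - C) := by
        simpa only [hN, Function.comp_def] using hφ.comp_tendsto (hLtend.comp hinvQ)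
    _ =O[atTop] (fun n => (1 / Q n) ^ (-ν)) := hLC.comp_tendsto hinvQ
    _ =ᶠ[atTop] (fun n => Q n ^ ν) := hQpos.mono fun n hn => by
        simp [Real.inv_rpow hn.le, Real.rpow_neg hn.le]
    _ =O[atTop] (fun n => ((n : ℝ)⁻¹) ^ ν) :=
        hQn.rpow hν.1.le (Eventually.of_forall fun n => inv_nonneg.2 n.cast_nonneg)
    _ = (fun n : ℕ => (n : ℝ) ^ (-ν)) := by
        simp [Real.inv_rpow, Real.rpow_neg]

theorem stmt_8
    (p : ℕ → ℝ) (hp_nonneg : ∀ j, 0 ≤ p j) (hp0 : 0 < p 0)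
    (hp_sum : ∑' j : ℕ, p j = 1) (hp_mean : ∑' j : ℕ, (j : ℝ) * p j = 1)
    (f : ℝ → ℝ) (hf : ∀ s : ℝ, f s = ∑' j : ℕ, p j * s ^ j)
    (ν : ℝ) (hν : ν ∈ Set.Ioo (0 : ℝ) 1)
    (L : ℝ → ℝ) (hLpos : ∀ x : ℝ, 0 < x → 0 < L x)
    (hSV : ∀ l : ℝ, 0 < l →
      Filter.Tendsto (fun x => L (l * x) / L x) Filter.atTop (𝓝 1))
    (hfΛ : ∀ s ∈ Set.Ico (0 : ℝ) 1,
      f s - s = (1 - s) ^ (1 + ν) * L (1 / (1 - s)))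
    (Λ : ℝ → ℝ) (hΛ : ∀ y ∈ Set.Ioc (0 : ℝ) 1, Λ y = y ^ ν * L (1 / y))
    (hRL : ∀ l : ℝ, 0 < l →
      (fun x => L (l * x) / L x - 1) =O[Filter.atTop] (fun x => L x / x ^ ν))
    (Q : ℕ → ℝ) (hQ : ∀ n, Q n = 1 - f^[n] 0)
    (N : ℕ → ℝ) (hN : ∀ n, N n = (L (1 / Q n)) ^ (-(1 / ν)))
    :
    ∃ Cₗ : ℝ, 0 < Cₗ ∧ Filter.Tendsto L Filter.atTop (𝓝 Cₗ) ∧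
      (fun n : ℕ => N n - Cₗ ^ (-(1 / ν))) =O[Filter.atTop]
        (fun n : ℕ => (n : ℝ) ^ (-ν)) :=
  stmt_8_general p hp_nonneg hp_sum hp_mean f hf ν hν L hLpos hSV hfΛ hRL Q hQ N hN
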